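/- arXiv:2602.05477 — 2 statements merged into one kernel-verified Lean document; each statement's English description precedes it below -/
import Mathlib

section
/- Let $\mu$ and $\Gamma$ be finite Borel measures on a metric space $X$, let $p \ge 1$, and let $u : X \to [0,\infty)$ be a Borel function. For $\lambda > 0$ set $A_\lambda = \{x : u(x) > \lambda\}$. Suppose there is a finite Borel measure $\sigma$ such that for every $\lambda > 0$, $\Gamma(A_{2\lambda}) \le \lambda^{-p}\, \sigma(A_\lambda \setminus A_{2\lambda})$. Then $\int_X u^p\, d\Gamma \le 2^{2p}\, \sigma(X)$. -/
open MeasureTheory Set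

/-- dyadic level-set summation (Maz'ya truncation) bound:
if `Γ({u > 2λ}) ≤ λ^{-p} σ({u > λ} \ {u > 2λ})` for all `λ > 0`, then
`∫ u^p dΓ ≤ 2^{2p} σ(X)`. -/
theorem stmt6 {X : Type*} [MetricSpace X] [MeasurableSpace X] [BorelSpace X]
    (μ Γ σ : Measure X) [IsFiniteMeasure μ] [IsFiniteMeasure Γ] [IsFiniteMeasure σ]
    (p : ℝ) (hp : 1 ≤ p) (u : X → ℝ) (hu : Measurable u) (hu0 : ∀ x, 0 ≤ u x)
    (h : ∀ lam : ℝ, 0 < lam →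
      Γ {x | 2 * lam < u x} ≤
        ENNReal.ofReal (lam ^ (-p)) * σ ({x | lam < u x} \ {x | 2 * lam < u x})) :
    ∫⁻ x, ENNReal.ofReal (u x ^ p) ∂Γ ≤ ENNReal.ofReal (2 ^ (2 * p)) * σ univ := by
  classical
  have h12 : (1:ℝ) ≤ 2 := one_le_two
  set A : ℤ → Set X := fun i => {x | (2:ℝ) ^ i < u x} with hAdef
  have hAm : ∀ i : ℤ, MeasurableSet (A i) := fun i =>
    measurableSet_lt measurable_const hu
  have hmono : ∀ {i j : ℤ}, i ≤ j → A j ⊆ A i := by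
    intro i j hij x hx
    exact lt_of_le_of_lt (zpow_le_zpow_right₀ h12 hij) hx
  set C : ℤ → Set X := fun i => A i \ A (i+1) with hCdef
  have hCm : ∀ i, MeasurableSet (C i) := fun i => (hAm i).diff (hAm (i+1))
  set f : X → ENNReal := fun x => ENNReal.ofReal (u x ^ p) with hfdef
  have hfm : Measurable f := (hu.pow measurable_const).ennreal_ofReal
  set D : ℤ → Set X := fun i => A (i-1) \ A i with hDdef
  have hDm : ∀ i, MeasurableSet (D i) := fun i => (hAm (i-1)).diff (hAm i)
  have hDd' : ∀ i j : ℤ, i < j → Disjoint (D i) (D j) := fun i j hij =>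
    Set.disjoint_left.2 fun x hx hx' => hx.2 (hmono (by omega : i ≤ j - 1) hx'.1)
  have hDd : Pairwise (Function.onFun Disjoint D) := fun i j hij =>
    hij.lt_or_gt.elim (hDd' i j) fun h' => (hDd' j i h').symm
  -- pointwise domination by the band indicators
  have hpt : ∀ x, f x ≤ ∑' i : ℤ, (C i).indicator f x := by
    intro x
    rcases eq_or_lt_of_le (hu0 x) with h0 | h0
    · have hz : u x ^ p = 0 := by
        rw [← h0]; exact Real.zero_rpow (by linarith)
      simp [hfdef, hz]
    · obtain ⟨n, hn⟩ := exists_mem_Ioc_zpow h0 one_lt_two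
      have hx : x ∈ C n := ⟨hn.1, not_lt.2 hn.2⟩
      calc f x = (C n).indicator f x := (Set.indicator_of_mem hx f).symm
        _ ≤ ∑' i : ℤ, (C i).indicator f x := ENNReal.le_tsum n
  -- per-band estimate
  have hband : ∀ i : ℤ, ∫⁻ x in C i, f x ∂Γ ≤ ENNReal.ofReal (2 ^ (2 * p)) * σ (D i) := by
    intro i
    have hstep1 : ∫⁻ x in C i, f x ∂Γ ≤
        ENNReal.ofReal (((2:ℝ) ^ (i+1)) ^ p) * Γ (C i) := by
      have hb : ∀ x ∈ C i, f x ≤ ENNReal.ofReal (((2:ℝ) ^ (i+1)) ^ p) := by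
        intro x hx
        exact ENNReal.ofReal_le_ofReal
          (Real.rpow_le_rpow (hu0 x) (not_lt.1 hx.2) (by linarith))
      calc ∫⁻ x in C i, f x ∂Γ
          ≤ ∫⁻ _ in C i, ENNReal.ofReal (((2:ℝ) ^ (i+1)) ^ p) ∂Γ :=
            setLIntegral_mono' (hCm i) hb
        _ = ENNReal.ofReal (((2:ℝ) ^ (i+1)) ^ p) * Γ (C i) := by
            rw [setLIntegral_const]
    have hCA : Γ (C i) ≤ Γ (A i) := measure_mono diff_subset
    have hlam : (0:ℝ) < 2 ^ (i-1) := zpow_pos (by norm_num) _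
    have hG : Γ (A i) ≤ ENNReal.ofReal (((2:ℝ) ^ (i-1)) ^ (-p)) * σ (D i) := by
      have h2 := h ((2:ℝ) ^ (i-1)) hlam
      have e1 : {x | 2 * (2:ℝ) ^ (i-1) < u x} = A i := by
        have : 2 * (2:ℝ) ^ (i-1) = 2 ^ i := by
          rw [show (2:ℝ) * 2 ^ (i-1) = 2 ^ (1:ℤ) * 2 ^ (i-1) by norm_num,
            ← zpow_add₀ (by norm_num : (2:ℝ) ≠ 0)]
          norm_num
        rw [this]
      rw [e1] at h2
      exact h2
    have hconst : ((2:ℝ) ^ (i+1)) ^ p * ((2:ℝ) ^ (i-1)) ^ (-p) = 2 ^ (2 * p) := by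
      rw [Real.rpow_neg (le_of_lt (zpow_pos (by norm_num) _)), ← div_eq_mul_inv,
        ← Real.div_rpow (le_of_lt (zpow_pos (by norm_num) (i+1))) (le_of_lt hlam),
        show (2:ℝ) ^ (i+1) / 2 ^ (i-1) = 4 by
          rw [← zpow_sub₀ (by norm_num : (2:ℝ) ≠ 0)]; norm_num,
        Real.rpow_mul (by norm_num : (0:ℝ) ≤ 2),
        show ((2:ℝ) ^ (2:ℝ)) = 4 by
          rw [show (2:ℝ) = ((2:ℕ):ℝ) from rfl, Real.rpow_natCast]; norm_num]
    calc ∫⁻ x in C i, f x ∂Γ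
        ≤ ENNReal.ofReal (((2:ℝ) ^ (i+1)) ^ p) * Γ (C i) := hstep1
      _ ≤ ENNReal.ofReal (((2:ℝ) ^ (i+1)) ^ p) *
            (ENNReal.ofReal (((2:ℝ) ^ (i-1)) ^ (-p)) * σ (D i)) := by
          exact mul_le_mul_right (hCA.trans hG) _
      _ = ENNReal.ofReal (((2:ℝ) ^ (i+1)) ^ p * ((2:ℝ) ^ (i-1)) ^ (-p)) * σ (D i) := by
          rw [← mul_assoc, ← ENNReal.ofReal_mul (by positivity)]
      _ = ENNReal.ofReal (2 ^ (2 * p)) * σ (D i) := by rw [hconst]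
  -- put everything together
  calc ∫⁻ x, f x ∂Γ ≤ ∫⁻ x, ∑' i : ℤ, (C i).indicator f x ∂Γ := lintegral_mono hpt
    _ = ∑' i : ℤ, ∫⁻ x, (C i).indicator f x ∂Γ :=
        lintegral_tsum fun i => (hfm.indicator (hCm i)).aemeasurable
    _ = ∑' i : ℤ, ∫⁻ x in C i, f x ∂Γ := by
        simp only [lintegral_indicator (hCm _)]
    _ ≤ ∑' i : ℤ, ENNReal.ofReal (2 ^ (2 * p)) * σ (D i) := ENNReal.tsum_le_tsum hband
    _ = ENNReal.ofReal (2 ^ (2 * p)) * ∑' i : ℤ, σ (D i) := ENNReal.tsum_mul_left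
    _ ≤ ENNReal.ofReal (2 ^ (2 * p)) * σ univ := by
        refine mul_le_mul_right ?_ _
        rw [← measure_iUnion hDd hDm]
        exact measure_mono (subset_univ _)
end

section
/- Let $(X,d,\mu,\mathcal{E}_p,\mathcal{F}_p,\Gamma_p)$ be a regular local $p$-Dirichlet space satisfying the capacity upper bound $\mathrm{Cap}_p(\Psi)$ and the Poincaré inequality $\mathrm{PI}_p(\Psi)$ (with constants $C_{\mathrm{cap}}$, $C_{\mathrm{PI}}$, $\Lambda$), and with $\mu$ doubling. Then the classical cutoff Sobolev inequality $\mathrm{CS}_{\mathrm{classical}}(\Psi)$ holds if and only if the cutoff Sobolev inequality $\mathrm{CS}_p$ holds. -/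
open MeasureTheory Metric Set ENNReal Filter

noncomputable section

/-- A regular local `p`-Dirichlet structure on a metric measure space (Definition 2.1 of the
paper).  Members of `F` are (representatives of) functions in the domain of the energy; `Γ f`
is the energy measure of `f`, and the total energy is `E_p(f) = Γ f univ`. -/
structure PDirichlet (X : Type) [MetricSpace X] [MeasurableSpace X] [BorelSpace X]
    (μ : Measure X) (p : ℝ) where
  F : Set (X → ℝ)
  Γ : (X → ℝ) → Measure X
  mem_Lp : ∀ f ∈ F, MemLp f (ENNReal.ofReal p) μ
  congr_ae : ∀ f ∈ F, ∀ g : X → ℝ, f =ᵐ[μ] g → Measurable g → g ∈ F ∧ Γ g = Γ f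
  energy_finite : ∀ f ∈ F, Γ f Set.univ ≠ ∞
  add_mem : ∀ f ∈ F, ∀ g ∈ F, f + g ∈ F
  smul_mem : ∀ (c : ℝ), ∀ f ∈ F, c • f ∈ F
  homogeneity : ∀ f ∈ F, ∀ c : ℝ, Γ (c • f) = ENNReal.ofReal (|c| ^ p) • Γ f
  triangle : ∀ f ∈ F, ∀ g ∈ F, ∀ A : Set X,
    (Γ (f + g) A) ^ (1 / p) ≤ (Γ f A) ^ (1 / p) + (Γ g A) ^ (1 / p)
  lipschitz_mem : ∀ f ∈ F, ∀ (L : NNReal) (g : ℝ → ℝ), LipschitzWith L g → g 0 = 0 →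
    g ∘ f ∈ F
  lipschitz_contract : ∀ f ∈ F, ∀ (L : NNReal) (g : ℝ → ℝ), LipschitzWith L g → g 0 = 0 →
    ∀ A : Set X, Γ (g ∘ f) A ≤ (L : ℝ≥0∞) ^ p * Γ f A
  locality : ∀ f ∈ F, ∀ A : Set X, IsOpen A → ∀ c : ℝ,
    (∀ᵐ x ∂(μ.restrict A), f x = c) → Γ f A = 0
  lsc : ∀ (f : X → ℝ) (fs : ℕ → X → ℝ), (∀ i, fs i ∈ F) → Measurable f →
    Tendsto (fun i => eLpNorm (fs i - f) (ENNReal.ofReal p) μ) atTop (nhds 0) →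
    (∃ M : ℝ≥0∞, M ≠ ∞ ∧ ∀ i, Γ (fs i) Set.univ ≤ M) →
    f ∈ F ∧ ∀ A : Set X, Γ f A ≤ liminf (fun i => Γ (fs i) A) atTop
  complete : ∀ fs : ℕ → X → ℝ, (∀ i, fs i ∈ F) →
    (∀ ε : ℝ≥0∞, 0 < ε → ∃ K, ∀ m ≥ K, ∀ n ≥ K,
      (eLpNorm (fs m - fs n) (ENNReal.ofReal p) μ) ^ p + Γ (fs m - fs n) Set.univ < ε) →
    ∃ f ∈ F, Tendsto (fun i =>
      (eLpNorm (fs i - f) (ENNReal.ofReal p) μ) ^ p + Γ (fs i - f) Set.univ) atTop (nhds 0)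
  regular_dense_F : ∀ f ∈ F, ∀ ε : ℝ, 0 < ε → ∃ g ∈ F, Continuous g ∧ HasCompactSupport g ∧
    (eLpNorm (f - g) (ENNReal.ofReal p) μ) ^ p + Γ (f - g) Set.univ < ENNReal.ofReal ε
  regular_dense_C : ∀ f : X → ℝ, Continuous f → HasCompactSupport f → ∀ ε : ℝ, 0 < ε →
    ∃ g ∈ F, Continuous g ∧ HasCompactSupport g ∧ ∀ x, |f x - g x| ≤ ε

namespace PDirichlet

variable {X : Type} [MetricSpace X] [MeasurableSpace X] [BorelSpace X]
  {μ : Measure X} {p : ℝ}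

/-- The `p`-th power of the `F_p`-norm, valued in `ℝ≥0∞`. -/
def fnormP (D : PDirichlet X μ p) (f : X → ℝ) : ℝ≥0∞ :=
  (∫⁻ x, ENNReal.ofReal (|f x| ^ p) ∂μ) + D.Γ f Set.univ

/-- Capacity of an open set. -/
def capOpen (D : PDirichlet X μ p) (O : Set X) : ℝ≥0∞ :=
  ⨅ (f : X → ℝ) (_ : f ∈ D.F) (_ : ∀ᵐ x ∂μ, x ∈ O → 1 ≤ f x), D.fnormP f

/-- Capacity of an arbitrary set, by outer regularity. -/
def cap (D : PDirichlet X μ p) (A : Set X) : ℝ≥0∞ :=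
  ⨅ (O : Set X) (_ : IsOpen O) (_ : A ⊆ O), D.capOpen O

/-- A function is quasicontinuous if it is continuous off open sets of arbitrarily small
capacity. -/
def QuasiCont (D : PDirichlet X μ p) (f : X → ℝ) : Prop :=
  ∀ ε : ℝ, 0 < ε → ∃ O : Set X, IsOpen O ∧ D.cap O < ENNReal.ofReal ε ∧ ContinuousOn f Oᶜ

end PDirichlet

/-- The `μ`-average of `f` over `A`. -/
def avgSet {X : Type} [MeasurableSpace X] (μ : Measure X) (A : Set X) (f : X → ℝ) : ℝ :=
  (μ A).toReal⁻¹ * ∫ y in A, f y ∂μ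

/-- A regular scale function (with constants `C_Ψ`, `β₊ ≥ β₋ > 0`). -/
def IsRegularScale {X : Type} [MetricSpace X] (Ψ : X → ℝ → ℝ) (C_Ψ βp βm : ℝ) : Prop :=
  (∀ x, Ψ x 0 = 0) ∧ (∀ x r, 0 < r → 0 < Ψ x r) ∧
  ∀ (x y : X) (s r : ℝ), 0 < s → s ≤ r →
    ENNReal.ofReal r ≤ 2 * EMetric.diam (Set.univ : Set X) →
    C_Ψ⁻¹ * ((max s (dist x y)) / r) ^ βp * (s / max r (dist x y)) ^ βm ≤ Ψ x r / Ψ y s ∧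
    Ψ x r / Ψ y s ≤ C_Ψ * (r / max r (dist x y)) ^ βm * ((max r (dist x y)) / s) ^ βp

/-- The capacity upper bound `Cap_p(Ψ)`. -/
def CapUB {X : Type} [MetricSpace X] [MeasurableSpace X] [BorelSpace X]
    {μ : Measure X} {p : ℝ} (D : PDirichlet X μ p) (Ψ : X → ℝ → ℝ) (Ccap : ℝ) : Prop :=
  ∀ (x : X) (r : ℝ), 0 < r → ∃ ψ ∈ D.F, Continuous ψ ∧
    (∀ y ∈ ball x r, ψ y = 1) ∧ (∀ y ∉ ball x (2 * r), ψ y = 0) ∧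
    D.Γ ψ Set.univ ≤ ENNReal.ofReal Ccap * μ (ball x r) / ENNReal.ofReal (Ψ x r)

/-- The Poincaré inequality `PI_p(Ψ)` (in the equivalent non-averaged form
`∫_B |f - f_B|^p dμ ≤ C_PI Ψ(B) Γ⟨f⟩(ΛB)`). -/
def PoincareIneq {X : Type} [MetricSpace X] [MeasurableSpace X] [BorelSpace X]
    {μ : Measure X} {p : ℝ} (D : PDirichlet X μ p) (Ψ : X → ℝ → ℝ) (CPI Λ : ℝ) : Prop :=
  ∀ (x : X) (r : ℝ), 0 < r → ∀ f ∈ D.F,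
    ∫⁻ y in ball x r, ENNReal.ofReal (|f y - avgSet μ (ball x r) f| ^ p) ∂μ ≤
      ENNReal.ofReal (CPI * Ψ x r) * D.Γ f (ball x (Λ * r))

/-- The measure `μ` is doubling (with finite positive measure on balls). -/
def DoublingMeasure' {X : Type} [MetricSpace X] [MeasurableSpace X] (μ : Measure X)
    (C_D : ℝ) : Prop :=
  (∀ (x : X) (r : ℝ), 0 < r → μ (ball x (2 * r)) ≤ ENNReal.ofReal C_D * μ (ball x r)) ∧
  (∀ (x : X) (r : ℝ), 0 < r → 0 < μ (ball x r) ∧ μ (ball x r) < ∞)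

end

open MeasureTheory Metric Set ENNReal Filter PDirichlet

/-- The cutoff Sobolev inequality `CS_p` (the two-weighted Poincaré form). -/
def CSp {X : Type} [MetricSpace X] [MeasurableSpace X] [BorelSpace X]
    {μ : Measure X} {p : ℝ} (D : PDirichlet X μ p) (C Λ : ℝ) : Prop :=
  ∀ (x : X) (r : ℝ), 0 < r → ∃ φ ∈ D.F,
    (∀ᵐ y ∂μ, y ∈ ball x r → φ y = 1) ∧ (∀ᵐ y ∂μ, y ∉ ball x (2 * r) → φ y = 0) ∧
    ∀ f ∈ D.F, ∀ g : X → ℝ, g =ᵐ[μ] f → D.QuasiCont g →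
      ∫⁻ y in ball x (2 * r),
          ENNReal.ofReal (|g y - avgSet μ (ball x r) f| ^ p) ∂(D.Γ φ) ≤
        ENNReal.ofReal C * D.Γ f (ball x (Λ * r))

/-- The classical cutoff Sobolev inequality `CS_classical(Ψ)`. -/
def CSclassical {X : Type} [MetricSpace X] [MeasurableSpace X] [BorelSpace X]
    {μ : Measure X} {p : ℝ} (D : PDirichlet X μ p) (Ψ : X → ℝ → ℝ) (C Λ : ℝ) : Prop :=
  ∀ (x : X) (r : ℝ), 0 < r → ∃ φ ∈ D.F,
    (∀ᵐ y ∂μ, y ∈ ball x r → φ y = 1) ∧ (∀ᵐ y ∂μ, y ∉ ball x (2 * r) → φ y = 0) ∧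
    ∀ f ∈ D.F, ∀ g : X → ℝ, g =ᵐ[μ] f → D.QuasiCont g →
      ∫⁻ y in ball x (2 * r), ENNReal.ofReal (|g y| ^ p) ∂(D.Γ φ) ≤
        ENNReal.ofReal C * D.Γ f (ball x (Λ * r)) +
          (ENNReal.ofReal C / ENNReal.ofReal (Ψ x r)) *
            ∫⁻ y in ball x (2 * r), ENNReal.ofReal (|f y| ^ p) ∂μ

lemma ofReal_abs_add_rpow_le {p : ℝ} (hp : 1 ≤ p) (u v : ℝ) :
    ENNReal.ofReal (|u + v| ^ p) ≤
      2 ^ (p - 1) * (ENNReal.ofReal (|u| ^ p) + ENNReal.ofReal (|v| ^ p)) := by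
  have hp0 : 0 ≤ p := by linarith
  rw [← ENNReal.ofReal_rpow_of_nonneg (abs_nonneg _) hp0,
    ← ENNReal.ofReal_rpow_of_nonneg (abs_nonneg _) hp0,
    ← ENNReal.ofReal_rpow_of_nonneg (abs_nonneg _) hp0]
  calc ENNReal.ofReal |u + v| ^ p ≤ (ENNReal.ofReal |u| + ENNReal.ofReal |v|) ^ p := by
        rw [← ENNReal.ofReal_add (abs_nonneg _) (abs_nonneg _)]
        gcongr
        exact abs_add_le u v
    _ ≤ _ := ENNReal.rpow_add_le_mul_rpow_add_rpow _ _ hp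

lemma exists_one_le_ofReal_ge {K : ℝ≥0∞} (hK : K ≠ ∞) : ∃ C : ℝ, 1 ≤ C ∧ K ≤ ENNReal.ofReal C :=
  ⟨max 1 K.toReal, le_max_left _ _,
    (ENNReal.ofReal_toReal hK).symm.trans_le (ENNReal.ofReal_le_ofReal (le_max_right _ _))⟩

section SetLIntegral

variable {X : Type} [MeasurableSpace X] {ν : Measure X} {p : ℝ}

lemma setLIntegral_abs_sub_rpow_le (hp : 1 ≤ p) (A : Set X) (f : X → ℝ) (a b : ℝ) :
    ∫⁻ y in A, ENNReal.ofReal (|f y - a| ^ p) ∂ν ≤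
      2 ^ (p - 1) * (∫⁻ y in A, ENNReal.ofReal (|f y - b| ^ p) ∂ν +
        ENNReal.ofReal (|b - a| ^ p) * ν A) := by
  calc ∫⁻ y in A, ENNReal.ofReal (|f y - a| ^ p) ∂ν
      ≤ ∫⁻ y in A, 2 ^ (p - 1) *
          (ENNReal.ofReal (|f y - b| ^ p) + ENNReal.ofReal (|b - a| ^ p)) ∂ν :=
        lintegral_mono fun y => by
          simpa only [sub_add_sub_cancel] using ofReal_abs_add_rpow_le hp (f y - b) (b - a)
    _ = _ := by
        rw [lintegral_const_mul' _ _ (ENNReal.rpow_ne_top_of_nonneg (by linarith) ofNat_ne_top),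
          lintegral_add_right' _ aemeasurable_const, setLIntegral_const]

lemma ofReal_abs_sub_rpow_mul_le (hp : 1 ≤ p) {A : Set X} {f : X → ℝ}
    (hf : AEMeasurable f (ν.restrict A)) (a b : ℝ) :
    ENNReal.ofReal (|b - a| ^ p) * ν A ≤
      2 ^ (p - 1) * (∫⁻ y in A, ENNReal.ofReal (|f y - b| ^ p) ∂ν +
        ∫⁻ y in A, ENNReal.ofReal (|f y - a| ^ p) ∂ν) := by
  calc ENNReal.ofReal (|b - a| ^ p) * ν A
      = ∫⁻ _ in A, ENNReal.ofReal (|b - a| ^ p) ∂ν := (setLIntegral_const _ _).symm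
    _ ≤ ∫⁻ y in A, 2 ^ (p - 1) *
          (ENNReal.ofReal (|f y - b| ^ p) + ENNReal.ofReal (|f y - a| ^ p)) ∂ν :=
        lintegral_mono fun y => by
          simpa only [sub_add_sub_cancel, abs_sub_comm b] using
            ofReal_abs_add_rpow_le hp (b - f y) (f y - a)
    _ = _ := by
        rw [lintegral_const_mul' _ _ (ENNReal.rpow_ne_top_of_nonneg (by linarith) ofNat_ne_top),
          lintegral_add_left' (by fun_prop)]

end SetLIntegral

namespace PDirichlet

variable {X : Type} [MetricSpace X] [MeasurableSpace X] [BorelSpace X]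
  {μ : Measure X} {p : ℝ} (D : PDirichlet X μ p)

lemma Γ_add_le_of_ae_eq_const (hp : 0 < p) {f g : X → ℝ} (hf : f ∈ D.F) (hg : g ∈ D.F)
    {A : Set X} (hA : IsOpen A) {c : ℝ} (hgc : ∀ᵐ x ∂(μ.restrict A), g x = c) :
    D.Γ (f + g) A ≤ D.Γ f A := by
  have h := D.triangle f hf g hg A
  rwa [D.locality g hg A hA c hgc, ENNReal.zero_rpow_of_pos (by positivity), add_zero,
    ENNReal.rpow_le_rpow_iff (by positivity)] at h

lemma cap_empty (hp : p ≠ 0) {f : X → ℝ} (hf : f ∈ D.F) : D.cap ∅ = 0 := by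
  have h0 : (0 : X → ℝ) ∈ D.F := by simpa using D.smul_mem 0 f hf
  have hΓ0 : D.Γ 0 = 0 := by simpa [Real.zero_rpow hp] using D.homogeneity f hf 0
  refine nonpos_iff_eq_zero.1 ?_
  calc D.cap ∅ ≤ D.capOpen ∅ := (iInf₂_le ∅ isOpen_empty).trans (iInf_le _ subset_rfl)
    _ ≤ D.fnormP 0 := (iInf₂_le 0 h0).trans (iInf_le _ (.of_forall fun _ hx => hx.elim))
    _ = 0 := by simp [fnormP, Real.zero_rpow hp, hΓ0]

lemma quasiCont_of_continuous (hp : p ≠ 0) {f g : X → ℝ} (hf : f ∈ D.F) (hg : Continuous g) :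
    D.QuasiCont g := fun _ hε =>
  ⟨∅, isOpen_empty, by rw [D.cap_empty hp hf]; exact ENNReal.ofReal_pos.2 hε, hg.continuousOn⟩

/-- Locality kills the energy of `φ` on the ball where `φ = 1`; off that ball the integrand
is `a ^ p`. -/
lemma ofReal_rpow_mul_Γ_le_setLIntegral {φ ψ : X → ℝ} (hφ : φ ∈ D.F) {x : X} {r : ℝ}
    (hφ1 : ∀ᵐ y ∂μ, y ∈ ball x r → φ y = 1) (hψ0 : ∀ y ∉ ball x r, ψ y = 0) {a : ℝ}
    (ha : 0 ≤ a) (R : ℝ) :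
    ENNReal.ofReal (a ^ p) * D.Γ φ (ball x R) ≤
      ∫⁻ y in ball x R, ENNReal.ofReal (|ψ y - a| ^ p) ∂(D.Γ φ) := by
  have hB : D.Γ φ (ball x r) = 0 := D.locality φ hφ _ isOpen_ball 1 <|
    (ae_restrict_iff' measurableSet_ball).2 hφ1
  calc ENNReal.ofReal (a ^ p) * D.Γ φ (ball x R)
      ≤ ENNReal.ofReal (a ^ p) * D.Γ φ (ball x R \ ball x r) := by
        rw [measure_sdiff_null hB]
    _ = ∫⁻ _ in ball x R \ ball x r, ENNReal.ofReal (a ^ p) ∂(D.Γ φ) := by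
        rw [setLIntegral_const, mul_comm]
    _ = ∫⁻ y in ball x R \ ball x r, ENNReal.ofReal (|ψ y - a| ^ p) ∂(D.Γ φ) :=
        setLIntegral_congr_fun (measurableSet_ball.diff measurableSet_ball) fun y hy => by
          rw [hψ0 y hy.2, zero_sub, abs_neg, abs_of_nonneg ha]
    _ ≤ _ := lintegral_mono_set sdiff_subset

end PDirichlet

section Scale

variable {X : Type} [MetricSpace X]

lemma IsRegularScale.apply_pos {Ψ : X → ℝ → ℝ} {C_Ψ βp βm : ℝ}
    (hΨ : IsRegularScale Ψ C_Ψ βp βm) (x : X) {r : ℝ} (hr : 0 < r) : 0 < Ψ x r :=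
  hΨ.2.1 x r hr

/-- Doubling of `Ψ` is only available below the diameter scale; above it the ball is
everything. -/
lemma IsRegularScale.apply_two_mul_le_or_ball_eq_univ {Ψ : X → ℝ → ℝ} {C_Ψ βp βm : ℝ}
    (hΨ : IsRegularScale Ψ C_Ψ βp βm) (x : X) {s : ℝ} (hs : 0 < s) :
    Ψ x (2 * s) ≤ |C_Ψ| * 2 ^ βp * Ψ x s ∨ ball x s = univ := by
  by_cases hd : ENNReal.ofReal (2 * s) ≤ 2 * ediam (univ : Set X)
  · left
    have h := (hΨ.2.2 x x s (2 * s) hs (by linarith) hd).2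
    rw [dist_self, max_eq_left (by positivity), div_self (by positivity), Real.one_rpow, mul_one,
      mul_div_cancel_right₀ _ hs.ne', div_le_iff₀ (hΨ.apply_pos x hs)] at h
    exact h.trans (by gcongr; exacts [(hΨ.apply_pos x hs).le, le_abs_self _])
  · right
    rw [not_le, ENNReal.ofReal_mul zero_le_two, ENNReal.ofReal_ofNat,
      ENNReal.mul_lt_mul_iff_right two_ne_zero ofNat_ne_top] at hd
    exact eq_univ_of_forall fun y =>
      edist_lt_ofReal.1 ((edist_le_ediam_of_mem (mem_univ y) (mem_univ x)).trans_lt hd)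

end Scale

section Measure

variable {X : Type} [MetricSpace X] [MeasurableSpace X] {μ : Measure X} {C_D : ℝ}

lemma DoublingMeasure'.const_pos (hdoub : DoublingMeasure' μ C_D) (x : X) : 0 < C_D := by
  by_contra! h
  have h2 := hdoub.1 x 1 one_pos
  rw [ENNReal.ofReal_of_nonpos h, zero_mul, nonpos_iff_eq_zero] at h2
  exact (hdoub.2 x 2 two_pos).1.ne' (by simpa using h2)

lemma DoublingMeasure'.one_le_const_mul_avgSet [OpensMeasurableSpace X]
    (hdoub : DoublingMeasure' μ C_D) {x : X} {r : ℝ} (hr : 0 < r) {ψ : X → ℝ}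
    (hψm : AEStronglyMeasurable ψ μ) (hψ0 : ∀ y, 0 ≤ ψ y) (hψ1 : ∀ y, ψ y ≤ 1)
    (hψ : ∀ y ∈ ball x (r / 2), ψ y = 1) :
    1 ≤ C_D * avgSet μ (ball x r) ψ := by
  obtain ⟨hB0, hBtop⟩ := hdoub.2 x r hr
  have hhalf : μ.real (ball x r) ≤ C_D * μ.real (ball x (r / 2)) := by
    have h := hdoub.1 x (r / 2) (half_pos hr)
    rw [mul_div_cancel₀ r two_ne_zero] at h
    simpa [measureReal_def, ENNReal.toReal_mul, ENNReal.toReal_ofReal (hdoub.const_pos x).le]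
      using ENNReal.toReal_mono (by finiteness [(hdoub.2 x _ (half_pos hr)).2.ne]) h
  have hint : μ.real (ball x (r / 2)) ≤ ∫ y in ball x r, ψ y ∂μ := by
    calc μ.real (ball x (r / 2)) = ∫ y in ball x (r / 2), ψ y ∂μ := by
          rw [setIntegral_congr_fun measurableSet_ball hψ, setIntegral_const, smul_eq_mul, mul_one]
      _ ≤ ∫ y in ball x r, ψ y ∂μ :=
          setIntegral_mono_set
            (Measure.integrableOn_of_bounded hBtop.ne hψm (M := 1) (.of_forall fun y => by
              rw [Real.norm_eq_abs, abs_of_nonneg (hψ0 y)]; exact hψ1 y))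
            (.of_forall hψ0) (ball_subset_ball (by linarith)).eventuallyLE
  have hBpos : 0 < μ.real (ball x r) := ENNReal.toReal_pos hB0.ne' hBtop.ne
  rw [avgSet, ← measureReal_def, mul_left_comm, inv_mul_eq_div, le_div_iff₀ hBpos, one_mul]
  exact hhalf.trans (mul_le_mul_of_nonneg_left hint (hdoub.const_pos x).le)

end Measure

lemma CapUB.exists_cutoff_mem_Icc {X : Type} [MetricSpace X] [MeasurableSpace X] [BorelSpace X]
    {μ : Measure X} {p : ℝ} {D : PDirichlet X μ p} {Ψ : X → ℝ → ℝ} {Ccap : ℝ}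
    (hcap : CapUB D Ψ Ccap) (x : X) {r : ℝ} (hr : 0 < r) :
    ∃ ψ ∈ D.F, Continuous ψ ∧ (∀ y, ψ y ∈ Icc 0 1) ∧
      (∀ y ∈ ball x r, ψ y = 1) ∧ (∀ y ∉ ball x (2 * r), ψ y = 0) ∧
      D.Γ ψ univ ≤ ENNReal.ofReal Ccap * μ (ball x r) / ENNReal.ofReal (Ψ x r) := by
  obtain ⟨ψ, hψF, hψc, hψ1, hψ0, hψΓ⟩ := hcap x r hr
  set clamp : ℝ → ℝ := fun t => max 0 (min t 1)
  have hlip : LipschitzWith 1 clamp := (LipschitzWith.id.min_const 1).const_max 0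
  have hclamp0 : clamp 0 = 0 := by simp [clamp]
  refine ⟨clamp ∘ ψ, D.lipschitz_mem ψ hψF 1 clamp hlip hclamp0, hlip.continuous.comp hψc,
    fun y => ⟨le_max_left _ _, max_le zero_le_one (min_le_right _ _)⟩,
    fun y hy => by simp [clamp, hψ1 y hy], fun y hy => by simp [clamp, hψ0 y hy], ?_⟩
  calc D.Γ (clamp ∘ ψ) univ ≤ ((1 : NNReal) : ℝ≥0∞) ^ p * D.Γ ψ univ :=
        D.lipschitz_contract ψ hψF 1 clamp hlip hclamp0 univ
    _ ≤ _ := by rwa [ENNReal.coe_one, ENNReal.one_rpow, one_mul]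

section Poincare

variable {X : Type} [MetricSpace X] [MeasurableSpace X] [BorelSpace X] {μ : Measure X} {p : ℝ}
  {D : PDirichlet X μ p} {Ψ : X → ℝ → ℝ} {CPI Λ₀ : ℝ}

lemma PoincareIneq.setLIntegral_le (hPI : PoincareIneq D Ψ CPI Λ₀) {x : X} {r : ℝ} (hr : 0 < r)
    (hΨ : 0 ≤ Ψ x r) {f : X → ℝ} (hf : f ∈ D.F) {R : ℝ} (hR : Λ₀ * r ≤ R) :
    ∫⁻ y in ball x r, ENNReal.ofReal (|f y - avgSet μ (ball x r) f| ^ p) ∂μ ≤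
      ENNReal.ofReal |CPI| * (ENNReal.ofReal (Ψ x r) * D.Γ f (ball x R)) := by
  calc _ ≤ ENNReal.ofReal (CPI * Ψ x r) * D.Γ f (ball x (Λ₀ * r)) := hPI x r hr f hf
    _ ≤ ENNReal.ofReal (|CPI| * Ψ x r) * D.Γ f (ball x R) := by
        gcongr
        exact le_abs_self _
    _ = _ := by rw [ENNReal.ofReal_mul (abs_nonneg _), mul_assoc]

lemma PoincareIneq.ofReal_abs_avgSet_rpow_mul_le (hp : 1 ≤ p) (hPI : PoincareIneq D Ψ CPI Λ₀)
    {x : X} {r : ℝ} (hr : 0 < r) (hΨ : 0 ≤ Ψ x r) {f : X → ℝ} (hf : f ∈ D.F) {R : ℝ}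
    (hR : Λ₀ * r ≤ R) :
    ENNReal.ofReal (|avgSet μ (ball x r) f| ^ p) * μ (ball x r) ≤
      2 ^ (p - 1) * (∫⁻ y in ball x r, ENNReal.ofReal (|f y| ^ p) ∂μ +
        ENNReal.ofReal |CPI| * (ENNReal.ofReal (Ψ x r) * D.Γ f (ball x R))) := by
  have h := ofReal_abs_sub_rpow_mul_le hp (A := ball x r)
    (D.mem_Lp f hf).1.aemeasurable.restrict 0 (avgSet μ (ball x r) f)
  simp only [sub_zero] at h
  refine h.trans ?_
  rw [add_comm]
  gcongr
  exact hPI.setLIntegral_le hr hΨ hf hR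

lemma PoincareIneq.setLIntegral_two_mul_le (hPI : PoincareIneq D Ψ CPI Λ₀) (hΛ₀ : 0 ≤ Λ₀)
    {C_Ψ βp βm : ℝ} (hΨ : IsRegularScale Ψ C_Ψ βp βm) {x : X} {r : ℝ} (hr : 0 < r)
    {f : X → ℝ} (hf : f ∈ D.F) {R : ℝ} (hR : 2 * Λ₀ * r ≤ R) :
    ∫⁻ y in ball x (2 * r), ENNReal.ofReal (|f y - avgSet μ (ball x (2 * r)) f| ^ p) ∂μ ≤
      (1 + ENNReal.ofReal (|C_Ψ| * 2 ^ βp)) * ENNReal.ofReal |CPI| *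
        (ENNReal.ofReal (Ψ x r) * D.Γ f (ball x R)) := by
  rcases hΨ.apply_two_mul_le_or_ball_eq_univ x hr with hscale | huniv
  · calc _ ≤ ENNReal.ofReal |CPI| * (ENNReal.ofReal (Ψ x (2 * r)) * D.Γ f (ball x R)) :=
          hPI.setLIntegral_le (by positivity) (hΨ.apply_pos x (by positivity)).le hf
            (by linarith)
      _ ≤ ENNReal.ofReal |CPI| *
            (ENNReal.ofReal (|C_Ψ| * 2 ^ βp) * ENNReal.ofReal (Ψ x r) * D.Γ f (ball x R)) := by
          rw [← ENNReal.ofReal_mul (by positivity)]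
          gcongr
      _ ≤ _ := by
          rw [mul_comm _ (ENNReal.ofReal |CPI|), mul_assoc, mul_assoc]
          gcongr
          exact le_add_self
  · have h2B : ball x (2 * r) = ball x r :=
      huniv ▸ eq_univ_of_univ_subset (huniv ▸ ball_subset_ball (by linarith))
    rw [h2B, mul_assoc]
    exact (hPI.setLIntegral_le hr (hΨ.apply_pos x hr).le hf (by nlinarith)).trans
      (le_mul_of_one_le_left' le_self_add)

lemma PoincareIneq.exists_setLIntegral_two_mul_sub_avgSet_le (hp : 1 ≤ p)
    (hPI : PoincareIneq D Ψ CPI Λ₀) (hΛ₀ : 0 ≤ Λ₀) {C_D : ℝ} (hdoub : DoublingMeasure' μ C_D)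
    {C_Ψ βp βm : ℝ} (hΨ : IsRegularScale Ψ C_Ψ βp βm) :
    ∃ K : ℝ≥0∞, K ≠ ∞ ∧ ∀ (x : X) (r : ℝ), 0 < r → ∀ f ∈ D.F,
      ∫⁻ y in ball x (2 * r), ENNReal.ofReal (|f y - avgSet μ (ball x r) f| ^ p) ∂μ ≤
        K * (ENNReal.ofReal (Ψ x r) * D.Γ f (ball x (2 * Λ₀ * r))) := by
  set e2 : ℝ≥0∞ := 2 ^ (p - 1)
  set cpi : ℝ≥0∞ := ENNReal.ofReal |CPI|
  set c : ℝ≥0∞ := (1 + ENNReal.ofReal (|C_Ψ| * 2 ^ βp)) * cpi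
  have he2 : e2 ≠ ∞ := ENNReal.rpow_ne_top_of_nonneg (by linarith) ofNat_ne_top
  refine ⟨e2 * (c + ENNReal.ofReal C_D * (e2 * (c + cpi))), by finiteness,
    fun x r hr f hf => ?_⟩
  set a := avgSet μ (ball x r) f
  set b := avgSet μ (ball x (2 * r)) f
  set P := ENNReal.ofReal (Ψ x r) * D.Γ f (ball x (2 * Λ₀ * r))
  have hB : ∫⁻ y in ball x r, ENNReal.ofReal (|f y - a| ^ p) ∂μ ≤ cpi * P :=
    hPI.setLIntegral_le hr (hΨ.apply_pos x hr).le hf (by nlinarith)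
  have h2B : ∫⁻ y in ball x (2 * r), ENNReal.ofReal (|f y - b| ^ p) ∂μ ≤ c * P :=
    hPI.setLIntegral_two_mul_le hΛ₀ hΨ hr hf le_rfl
  have hba : ENNReal.ofReal (|b - a| ^ p) * μ (ball x r) ≤ e2 * (c * P + cpi * P) := by
    refine (ofReal_abs_sub_rpow_mul_le hp (D.mem_Lp f hf).1.aemeasurable.restrict a b).trans ?_
    gcongr
    exact (lintegral_mono_set (ball_subset_ball (by linarith))).trans h2B
  calc _ ≤ e2 * (∫⁻ y in ball x (2 * r), ENNReal.ofReal (|f y - b| ^ p) ∂μ +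
          ENNReal.ofReal (|b - a| ^ p) * μ (ball x (2 * r))) :=
        setLIntegral_abs_sub_rpow_le hp _ f a b
    _ ≤ e2 * (c * P + ENNReal.ofReal C_D * (ENNReal.ofReal (|b - a| ^ p) * μ (ball x r))) := by
        rw [mul_left_comm (ENNReal.ofReal C_D)]
        gcongr
        exact hdoub.1 x r hr
    _ ≤ e2 * (c * P + ENNReal.ofReal C_D * (e2 * (c * P + cpi * P))) := by gcongr
    _ = _ := by ring

end Poincare

lemma PDirichlet.QuasiCont.add_continuous {X : Type} [MetricSpace X] [MeasurableSpace X]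
    [BorelSpace X] {μ : Measure X} {p : ℝ} {D : PDirichlet X μ p} {g ψ : X → ℝ}
    (hg : D.QuasiCont g) (hψ : Continuous ψ) : D.QuasiCont (g + ψ) := fun ε hε => by
  obtain ⟨O, hO, hcap, hcont⟩ := hg ε hε
  exact ⟨O, hO, hcap, hcont.add hψ.continuousOn⟩

section CutoffSobolev

variable {X : Type} [MetricSpace X] [MeasurableSpace X] [BorelSpace X] {μ : Measure X} {p : ℝ}
  {D : PDirichlet X μ p} {Ψ : X → ℝ → ℝ} {C Λ : ℝ}

/-- Subtracting `f_B ψ`, with `ψ ≡ 1` on a ball containing `2B ∪ ΛB`, turns `f` into `f - f_B`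
on `2B` without changing its energy on `ΛB`. -/
lemma CSclassical.exists_CSp (hp : 0 < p) (hcs : CSclassical D Ψ C Λ) (hΛ : 1 ≤ Λ)
    {Ccap : ℝ} (hcap : CapUB D Ψ Ccap) (hΨ : ∀ x r, 0 < r → 0 < Ψ x r) {K : ℝ≥0∞}
    (hK : K ≠ ∞) {Λ₁ : ℝ} (hPI : ∀ (x : X) (r : ℝ), 0 < r → ∀ f ∈ D.F,
      ∫⁻ y in ball x (2 * r), ENNReal.ofReal (|f y - avgSet μ (ball x r) f| ^ p) ∂μ ≤
        K * (ENNReal.ofReal (Ψ x r) * D.Γ f (ball x (Λ₁ * r)))) :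
    ∃ C' Λ' : ℝ, 1 ≤ C' ∧ 1 ≤ Λ' ∧ CSp D C' Λ' := by
  obtain ⟨C', hC', hCC'⟩ := exists_one_le_ofReal_ge (K := ENNReal.ofReal C * (1 + K))
    (by finiteness)
  refine ⟨C', max Λ Λ₁, hC', hΛ.trans (le_max_left _ _), fun x r hr => ?_⟩
  obtain ⟨φ, hφF, hφ1, hφ0, hcsφ⟩ := hcs x r hr
  refine ⟨φ, hφF, hφ1, hφ0, fun f hf g hgf hg => ?_⟩
  set a := avgSet μ (ball x r) f
  set Γf := D.Γ f (ball x (max Λ Λ₁ * r))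
  obtain ⟨ψ, hψF, hψc, hψ1, -⟩ :=
    hcap x (max (2 * r) (Λ * r)) (lt_max_of_lt_left (by linarith))
  have hψ2 : ∀ y ∈ ball x (2 * r), ψ y = 1 :=
    fun y hy => hψ1 y (ball_subset_ball (le_max_left _ _) hy)
  have haψ : (-a) • ψ ∈ D.F := D.smul_mem _ ψ hψF
  have hΓ : D.Γ (f + (-a) • ψ) (ball x (Λ * r)) ≤ Γf :=
    (D.Γ_add_le_of_ae_eq_const hp hf haψ isOpen_ball (c := -a)
      (ae_restrict_of_forall_mem measurableSet_ball fun y hy => by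
        simp [hψ1 y (ball_subset_ball (le_max_right _ _) hy)])).trans
      (measure_mono (ball_subset_ball (by gcongr; exact le_max_left _ _)))
  have h2B (u : X → ℝ) : ∀ y ∈ ball x (2 * r), |(u + (-a) • ψ) y| ^ p = |u y - a| ^ p :=
    fun y hy => by simp [hψ2 y hy, sub_eq_add_neg]
  have hE0 : ENNReal.ofReal (Ψ x r) ≠ 0 := (ENNReal.ofReal_pos.2 (hΨ x r hr)).ne'
  calc ∫⁻ y in ball x (2 * r), ENNReal.ofReal (|g y - a| ^ p) ∂(D.Γ φ)
      = ∫⁻ y in ball x (2 * r), ENNReal.ofReal (|(g + (-a) • ψ) y| ^ p) ∂(D.Γ φ) :=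
        setLIntegral_congr_fun measurableSet_ball fun y hy => by rw [h2B g y hy]
    _ ≤ ENNReal.ofReal C * D.Γ (f + (-a) • ψ) (ball x (Λ * r)) +
          ENNReal.ofReal C / ENNReal.ofReal (Ψ x r) *
            ∫⁻ y in ball x (2 * r), ENNReal.ofReal (|(f + (-a) • ψ) y| ^ p) ∂μ :=
        hcsφ _ (D.add_mem f hf _ haψ) _ (hgf.add .rfl)
          (hg.add_continuous (continuous_const.smul hψc))
    _ = ENNReal.ofReal C * D.Γ (f + (-a) • ψ) (ball x (Λ * r)) +
          ENNReal.ofReal C / ENNReal.ofReal (Ψ x r) *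
            ∫⁻ y in ball x (2 * r), ENNReal.ofReal (|f y - a| ^ p) ∂μ := by
        rw [setLIntegral_congr_fun measurableSet_ball fun y hy => by rw [h2B f y hy]]
    _ ≤ ENNReal.ofReal C * Γf + ENNReal.ofReal C / ENNReal.ofReal (Ψ x r) *
          (K * (ENNReal.ofReal (Ψ x r) * Γf)) := by
        gcongr
        exact (hPI x r hr f hf).trans
          (by gcongr; exact measure_mono (ball_subset_ball (by gcongr; exact le_max_right Λ Λ₁)))
    _ = ENNReal.ofReal C * (1 + K) * Γf := by
        rw [show ∀ c e : ℝ≥0∞, c / e * (K * (e * Γf)) = c / e * e * (K * Γf) by intros; ring,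
          ENNReal.div_mul_cancel hE0 ofReal_ne_top]
        ring
    _ ≤ _ := by gcongr

/-- Testing the cutoff inequality of `φ` on a cutoff `ψ` of the half ball: `ψ = 0` on `2B \ B`,
where all the energy of `φ` lives, while the average of `ψ` over `B` is at least `1 / C_D`. -/
lemma Γ_mul_le_of_cutoff_ineq (hp : 0 < p) {C_D : ℝ} (hdoub : DoublingMeasure' μ C_D)
    {C_Ψ βp βm : ℝ} (hΨ : IsRegularScale Ψ C_Ψ βp βm) {Ccap : ℝ} (hcap : CapUB D Ψ Ccap)
    {x : X} {r : ℝ} (hr : 0 < r) {φ : X → ℝ} (hφ : φ ∈ D.F)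
    (hφ1 : ∀ᵐ y ∂μ, y ∈ ball x r → φ y = 1)
    (hcs : ∀ ψ ∈ D.F, Continuous ψ →
      ∫⁻ y in ball x (2 * r), ENNReal.ofReal (|ψ y - avgSet μ (ball x r) ψ| ^ p) ∂(D.Γ φ) ≤
        ENNReal.ofReal C * D.Γ ψ (ball x (Λ * r))) :
    D.Γ φ (ball x (2 * r)) * ENNReal.ofReal (Ψ x r) ≤
      ENNReal.ofReal (C_D ^ p) * ENNReal.ofReal C * ENNReal.ofReal Ccap *
        ENNReal.ofReal (|C_Ψ| * 2 ^ βp) * μ (ball x r) := by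
  rcases hΨ.apply_two_mul_le_or_ball_eq_univ x (half_pos hr) with hscale | huniv
  swap
  · have hB : D.Γ φ (ball x r) = 0 := D.locality φ hφ _ isOpen_ball 1 <|
      (ae_restrict_iff' measurableSet_ball).2 hφ1
    have h2B : ball x (2 * r) = ball x r := by
      rw [eq_univ_of_univ_subset (huniv ▸ ball_subset_ball (by linarith) : univ ⊆ ball x r),
        eq_univ_of_univ_subset (huniv ▸ ball_subset_ball (by linarith) : univ ⊆ ball x (2 * r))]
    simp [h2B, hB]
  rw [mul_div_cancel₀ r two_ne_zero] at hscale
  obtain ⟨ψ, hψF, hψc, hψI, hψ1, hψ0, hψΓ⟩ := hcap.exists_cutoff_mem_Icc x (half_pos hr)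
  rw [mul_div_cancel₀ r two_ne_zero] at hψ0
  set a := avgSet μ (ball x r) ψ
  have ha : 1 ≤ C_D * a := hdoub.one_le_const_mul_avgSet hr hψc.aestronglyMeasurable
    (fun y => (hψI y).1) (fun y => (hψI y).2) hψ1
  have hCD := hdoub.const_pos x
  have ha0 : 0 ≤ a := (pos_of_mul_pos_right (one_pos.trans_le ha) hCD.le).le
  have hEh : ENNReal.ofReal (Ψ x (r / 2)) ≠ 0 :=
    (ENNReal.ofReal_pos.2 (hΨ.apply_pos x (half_pos hr))).ne'
  calc D.Γ φ (ball x (2 * r)) * ENNReal.ofReal (Ψ x r)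
      ≤ ENNReal.ofReal ((C_D * a) ^ p) * D.Γ φ (ball x (2 * r)) * ENNReal.ofReal (Ψ x r) := by
        gcongr
        exact le_mul_of_one_le_left' (ENNReal.one_le_ofReal.2 (Real.one_le_rpow ha hp.le))
    _ = ENNReal.ofReal (C_D ^ p) * (ENNReal.ofReal (a ^ p) * D.Γ φ (ball x (2 * r))) *
          ENNReal.ofReal (Ψ x r) := by
        rw [Real.mul_rpow hCD.le ha0, ENNReal.ofReal_mul (by positivity)]
        ring
    _ ≤ ENNReal.ofReal (C_D ^ p) *
          (ENNReal.ofReal C * (ENNReal.ofReal Ccap * μ (ball x (r / 2)) /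
            ENNReal.ofReal (Ψ x (r / 2)))) *
          (ENNReal.ofReal (|C_Ψ| * 2 ^ βp) * ENNReal.ofReal (Ψ x (r / 2))) := by
        refine mul_le_mul' (mul_le_mul_right ?_ _) ?_
        · refine (D.ofReal_rpow_mul_Γ_le_setLIntegral hφ hφ1 hψ0 ha0 _).trans
            ((hcs ψ hψF hψc).trans ?_)
          gcongr
          exact (measure_mono (subset_univ _)).trans hψΓ
        · rw [← ENNReal.ofReal_mul (by positivity)]
          exact ENNReal.ofReal_le_ofReal hscale
    _ = ENNReal.ofReal (C_D ^ p) * ENNReal.ofReal C * ENNReal.ofReal Ccap *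
          ENNReal.ofReal (|C_Ψ| * 2 ^ βp) * μ (ball x (r / 2)) := by
        rw [show ∀ c e : ℝ≥0∞, ENNReal.ofReal (C_D ^ p) * (ENNReal.ofReal C * c) *
            (ENNReal.ofReal (|C_Ψ| * 2 ^ βp) * e) = ENNReal.ofReal (C_D ^ p) * ENNReal.ofReal C *
              ENNReal.ofReal (|C_Ψ| * 2 ^ βp) * (c * e) by intros; ring,
          ENNReal.div_mul_cancel hEh ofReal_ne_top]
        ring
    _ ≤ _ := by gcongr; linarith

/-- `CS_p` only controls `g - f_B`; the constant `f_B` is paid for by the energy bound on `φ`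
and by `PI_p` on `B`. -/
lemma CSp.exists_CSclassical (hp : 1 < p) (hcs : CSp D C Λ) (hΛ : 1 ≤ Λ) {C_D : ℝ}
    (hdoub : DoublingMeasure' μ C_D) {C_Ψ βp βm : ℝ} (hΨ : IsRegularScale Ψ C_Ψ βp βm)
    {Ccap : ℝ} (hcap : CapUB D Ψ Ccap) {CPI Λ₀ : ℝ} (hPI : PoincareIneq D Ψ CPI Λ₀) :
    ∃ C' Λ' : ℝ, 1 ≤ C' ∧ 1 ≤ Λ' ∧ CSclassical D Ψ C' Λ' := by
  set e2 : ℝ≥0∞ := 2 ^ (p - 1)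
  set Kφ : ℝ≥0∞ := ENNReal.ofReal (C_D ^ p) * ENNReal.ofReal C * ENNReal.ofReal Ccap *
    ENNReal.ofReal (|C_Ψ| * 2 ^ βp)
  set cpi : ℝ≥0∞ := ENNReal.ofReal |CPI|
  have he2 : e2 ≠ ∞ := ENNReal.rpow_ne_top_of_nonneg (by linarith) ofNat_ne_top
  obtain ⟨C', hC', hCC'⟩ := exists_one_le_ofReal_ge
    (K := max (e2 * (ENNReal.ofReal C + e2 * Kφ * cpi)) (e2 * e2 * Kφ)) (by finiteness)
  refine ⟨C', max Λ Λ₀, hC', hΛ.trans (le_max_left _ _), fun x r hr => ?_⟩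
  obtain ⟨φ, hφF, hφ1, hφ0, hcsφ⟩ := hcs x r hr
  refine ⟨φ, hφF, hφ1, hφ0, fun f hf g hgf hg => ?_⟩
  set a := avgSet μ (ball x r) f
  set E := ENNReal.ofReal (Ψ x r)
  set Γf := D.Γ f (ball x (max Λ Λ₀ * r))
  set If := ∫⁻ y in ball x (2 * r), ENNReal.ofReal (|f y| ^ p) ∂μ
  have hE0 : E ≠ 0 := (ENNReal.ofReal_pos.2 (hΨ.apply_pos x hr)).ne'
  set k := Kφ / E
  have hkE : k * E = Kφ := ENNReal.div_mul_cancel hE0 ofReal_ne_top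
  have hΓφ : D.Γ φ (ball x (2 * r)) ≤ k * μ (ball x r) := by
    rw [← ENNReal.mul_div_right_comm, ENNReal.le_div_iff_mul_le (.inl hE0) (.inl ofReal_ne_top)]
    exact Γ_mul_le_of_cutoff_ineq (by linarith) hdoub hΨ hcap hr hφF hφ1 fun ψ hψ hψc =>
      hcsφ ψ hψ ψ .rfl (D.quasiCont_of_continuous (by linarith) hψ hψc)
  have hmean : ENNReal.ofReal (|a| ^ p) * μ (ball x r) ≤ e2 * (If + cpi * (E * Γf)) :=
    (hPI.ofReal_abs_avgSet_rpow_mul_le hp.le hr (hΨ.apply_pos x hr).le hf (R := max Λ Λ₀ * r)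
      (by gcongr; exact le_max_right _ _)).trans
      (by gcongr; exact lintegral_mono_set (ball_subset_ball (by linarith)))
  calc ∫⁻ y in ball x (2 * r), ENNReal.ofReal (|g y| ^ p) ∂(D.Γ φ)
      ≤ e2 * (∫⁻ y in ball x (2 * r), ENNReal.ofReal (|g y - a| ^ p) ∂(D.Γ φ) +
          ENNReal.ofReal (|a| ^ p) * D.Γ φ (ball x (2 * r))) := by
        simpa only [sub_zero] using setLIntegral_abs_sub_rpow_le hp.le _ g 0 a
    _ ≤ e2 * (ENNReal.ofReal C * Γf +
          k * (ENNReal.ofReal (|a| ^ p) * μ (ball x r))) := by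
        rw [mul_left_comm k]
        gcongr
        exact (hcsφ f hf g hgf hg).trans
          (by gcongr; exact measure_mono (ball_subset_ball (by gcongr; exact le_max_left Λ Λ₀)))
    _ ≤ e2 * (ENNReal.ofReal C * Γf + k * (e2 * (If + cpi * (E * Γf)))) := by gcongr
    _ = e2 * (ENNReal.ofReal C + e2 * (k * E) * cpi) * Γf + e2 * e2 * k * If := by ring
    _ ≤ ENNReal.ofReal C' * Γf + ENNReal.ofReal C' / E * If := by
        rw [hkE, ← mul_div_assoc]
        gcongr
        exacts [(le_max_left _ _).trans hCC', (le_max_right _ _).trans hCC']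

end CutoffSobolev

theorem stmt12_general {X : Type} [MetricSpace X] [MeasurableSpace X] [BorelSpace X]
    (μ : Measure X) (p : ℝ) (hp : 1 < p) (D : PDirichlet X μ p)
    (C_D : ℝ) (hdoub : DoublingMeasure' μ C_D)
    (Ψ : X → ℝ → ℝ) (C_Ψ βp βm : ℝ) (hΨ : IsRegularScale Ψ C_Ψ βp βm)
    (Ccap : ℝ) (hcap : CapUB D Ψ Ccap)
    (CPI Λ₀ : ℝ) (hΛ₀ : 8 ≤ Λ₀) (hPI : PoincareIneq D Ψ CPI Λ₀) :
    (∃ C Λ : ℝ, 1 ≤ C ∧ 1 ≤ Λ ∧ CSclassical D Ψ C Λ) ↔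
      (∃ C Λ : ℝ, 1 ≤ C ∧ 1 ≤ Λ ∧ CSp D C Λ) := by
  constructor
  · rintro ⟨C, Λ, -, hΛ, hcs⟩
    obtain ⟨K, hK, hPI₂⟩ :=
      hPI.exists_setLIntegral_two_mul_sub_avgSet_le hp.le (by linarith) hdoub hΨ
    exact hcs.exists_CSp (by linarith) hΛ hcap (fun x _ hr => hΨ.apply_pos x hr) hK hPI₂
  · rintro ⟨C, Λ, -, hΛ, hcs⟩
    exact hcs.exists_CSclassical hp hΛ hdoub hΨ hcap hPI

/-- under volume doubling, `Cap_p(Ψ)` and `PI_p(Ψ)`, the classical cutoff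
Sobolev inequality is equivalent to `CS_p`. -/
theorem stmt12 {X : Type} [MetricSpace X] [MeasurableSpace X] [BorelSpace X]
    (μ : Measure X) (p : ℝ) (hp : 1 < p) (D : PDirichlet X μ p)
    (C_D : ℝ) (hdoub : DoublingMeasure' μ C_D)
    (Ψ : X → ℝ → ℝ) (C_Ψ βp βm : ℝ) (hΨ : IsRegularScale Ψ C_Ψ βp βm)
    (hβp : 0 < βp) (hβm : 0 < βm)
    (Ccap : ℝ) (hcap : CapUB D Ψ Ccap)
    (CPI Λ₀ : ℝ) (hΛ₀ : 8 ≤ Λ₀) (hPI : PoincareIneq D Ψ CPI Λ₀) :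
    (∃ C Λ : ℝ, 1 ≤ C ∧ 1 ≤ Λ ∧ CSclassical D Ψ C Λ) ↔
      (∃ C Λ : ℝ, 1 ≤ C ∧ 1 ≤ Λ ∧ CSp D C Λ) :=
  stmt12_general μ p hp D C_D hdoub Ψ C_Ψ βp βm hΨ Ccap hcap CPI Λ₀ hΛ₀ hPI
end
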